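/- For the semi-implicit scheme (21) with κ = 0 and V > 0, the amplification factor S(θ) = (1 − (C/4)(e^{iθ} − e^{−iθ})) / (1 + (C/4)(3 − 4e^{−iθ} + e^{−2iθ})) satisfies |S(θ)| ≤ 1 for all θ ∈ ℝ and all C ≥ 0. -/

import Mathlib

open Complex

/-
With c = cos θ and s = sin θ, the numerator of S is 1 - (C/2) s i and the denominator is
1 + (C/2)(1 - c)² + (C/2) s (2 - c) i. Hence
|den|² - |num|² = C (1 - c)² + (C²/4) (1 - c)⁴ + (C²/4) s² (1 - c)(3 - c),
which is nonnegative because c ≤ 1.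
-/

lemma exp_neg_I_mul_ofReal (θ : ℝ) :
    exp (-(I * θ)) = Real.cos θ - Real.sin θ * I := by
  rw [show -(I * θ) = ((-θ : ℝ) : ℂ) * I by push_cast; ring, exp_mul_I, ← ofReal_cos,
    ← ofReal_sin, Real.cos_neg, Real.sin_neg]
  push_cast
  ring

lemma exp_I_mul_ofReal (θ : ℝ) :
    exp (I * θ) = Real.cos θ + Real.sin θ * I := by
  rw [mul_comm, exp_mul_I, ← ofReal_cos, ← ofReal_sin]

lemma one_sub_mul_exp_sub_exp_neg (a θ : ℝ) :
    1 - (a : ℂ) * (exp (I * θ) - exp (-(I * θ))) =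
      ((1 : ℝ) : ℂ) + ((-2 * a * Real.sin θ : ℝ) : ℂ) * I := by
  rw [exp_I_mul_ofReal, exp_neg_I_mul_ofReal]
  push_cast
  ring

lemma one_add_mul_three_sub_four_exp_neg_add_exp_neg_two (a θ : ℝ) :
    1 + (a : ℂ) * (3 - 4 * exp (-(I * θ)) + exp (-(2 * I * θ))) =
      ((1 + 2 * a * (1 - Real.cos θ) ^ 2 : ℝ) : ℂ) +
        ((2 * a * Real.sin θ * (2 - Real.cos θ) : ℝ) : ℂ) * I := by
  rw [show -(2 * I * θ) = -(I * θ) + -(I * θ) by ring, exp_add, exp_neg_I_mul_ofReal]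
  push_cast
  linear_combination (-(a : ℂ)) * sin_sq_add_cos_sq (θ : ℂ) + (a : ℂ) * sin (θ : ℂ) ^ 2 * I_sq

lemma one_add_sq_le_of_le_one {a c s : ℝ} (ha : 0 ≤ a) (hc : c ≤ 1) :
    1 ^ 2 + (-2 * a * s) ^ 2 ≤ (1 + 2 * a * (1 - c) ^ 2) ^ 2 + (2 * a * s * (2 - c)) ^ 2 := by
  have h1 : 0 ≤ 1 - c := by linarith
  have h3 : 0 ≤ 3 - c := by linarith
  have hdiff : 0 ≤ 4 * a * (1 - c) ^ 2 + 4 * a ^ 2 * (1 - c) ^ 4 +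
      4 * a ^ 2 * s ^ 2 * (1 - c) * (3 - c) := by
    positivity
  linear_combination hdiff

lemma norm_div_le_one_of_normSq_le {z w : ℂ} (h : normSq z ≤ normSq w) : ‖z / w‖ ≤ 1 := by
  rw [norm_div]
  refine div_le_one_of_le₀ ?_ (norm_nonneg _)
  rw [norm_def, norm_def]
  exact Real.sqrt_le_sqrt h

/-- Von Neumann stability of the semi-implicit scheme (21) (κ = 0, V > 0):
|S(θ)| ≤ 1 for all θ ∈ ℝ and all C ≥ 0. -/
theorem stmt10 :
    ∀ (C θ : ℝ), 0 ≤ C →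
      ‖
          ((1 - (C / 4 : ℝ) * (Complex.exp (Complex.I * θ) - Complex.exp (-(Complex.I * θ)))) /
            (1 + (C / 4 : ℝ) *
              (3 - 4 * Complex.exp (-(Complex.I * θ)) + Complex.exp (-(2 * Complex.I * θ)))))‖ ≤ 1 := by
  intro C θ hC
  rw [one_sub_mul_exp_sub_exp_neg, one_add_mul_three_sub_four_exp_neg_add_exp_neg_two]
  apply norm_div_le_one_of_normSq_le
  rw [normSq_add_mul_I, normSq_add_mul_I]
  exact one_add_sq_le_of_le_one (by positivity) (Real.cos_le_one θ)
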